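/- Let p ≥ 3 be a prime, u ∈ {1,…,p−1}, and let n ≥ p be of the form n = n''·p^{s+1} + k·p^s + j with n'' ∈ ℕ, k ∈ {1,…,p−1}, s ∈ ℕ₊ and j ∈ {0,…,p−1}. If j ≥ u, then ν_p( ∑_{i=0}^{u} (−1)^i · C(u,i) · D_p(n−i) ) = 1. -/

import Mathlib

/-!
Because `(1 - x)^(p-1)` has degree `< p`, the identity `F(x) = (1 - x)^(p-1) F(x^p)` for
`F = ∏ (1 - x^(p^i))^(p-1)` gives `D_p(p m + d) = (-1)^d C(p-1, d) D_p(m)` for every digit `d < p`;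
hence `D_p(m)` is a product of factors prime to `p`. When the last digit `j` of `n` is at least `u`,
subtracting `i ≤ u` only changes that digit, so the sum equals `D_p(⌊n/p⌋)` times the coefficient of
`x^j` in `(1 - x)^u (1 - x)^(p-1) = (1 - x)^(u+p-1)`, that is `±C(u+p-1, j) D_p(⌊n/p⌋)`. By Kummer's
theorem the addition `j + (u+p-1-j)` of two digits has exactly one carry, so `p` divides this
binomial coefficient exactly once.
-/

open PowerSeries Finset

/-- The number of digits equal to `i` in the base-`p` representation of `n`. -/
def Np (p i n : ℕ) : ℕ := (Nat.digits p n).count i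

/-- `Dcoef p r n` is the coefficient of `x^n` in `∏_{i=0}^∞ (1 - x^{p^i})^r`.
Since `p ≥ 2`, the factors with index `i > n` do not affect the coefficient of `x^n`,
so the product may be truncated at `i = n`. -/
noncomputable def Dcoef (p r n : ℕ) : ℤ :=
  PowerSeries.coeff (R := ℤ) n (∏ i ∈ Finset.range (n + 1), (1 - PowerSeries.X ^ p ^ i) ^ r)

/-- `Dp p n = D_{p,p-1}(n)`. -/
noncomputable def Dp (p n : ℕ) : ℤ := Dcoef p (p - 1) n

/-- `Acoef m k n` is the coefficient of `x^n` in `∏_{i=0}^∞ (1 - x^{m^i})^{-k}`,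
the number of `k`-colored `m`-ary partitions of `n`.  Here `(1 - X^{m^i})⁻¹` is
realized as `PowerSeries.invOfUnit (1 - X ^ m ^ i) 1`, and since `m ≥ 2` the factors
with index `i > n` do not affect the coefficient of `x^n`. -/
noncomputable def Acoef (m k n : ℕ) : ℤ :=
  PowerSeries.coeff (R := ℤ) n
    (∏ i ∈ Finset.range (n + 1),
      (PowerSeries.invOfUnit (1 - PowerSeries.X ^ m ^ i) 1) ^ k)

namespace PowerSeries

variable {R : Type*} [CommRing R]

theorem coeff_mul_one_sub_X_pow_pow_of_lt (φ : R⟦X⟧) {m q : ℕ} (hm : m < q) (r : ℕ) :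
    coeff m (φ * (1 - X ^ q) ^ r) = coeff m φ := by
  obtain ⟨g, hg⟩ := sub_dvd_pow_sub_pow (1 : R⟦X⟧) (1 - X ^ q) r
  rw [one_pow, sub_sub_cancel] at hg
  rw [show (1 - X ^ q : R⟦X⟧) ^ r = 1 - X ^ q * g by rw [← hg, sub_sub_cancel],
    mul_sub, mul_one, map_sub, mul_left_comm, coeff_X_pow_mul', if_neg (not_le.mpr hm), sub_zero]

theorem coeff_mul_expand {p : ℕ} (hp : p ≠ 0) {φ : R⟦X⟧} (hφ : ∀ i, p ≤ i → coeff i φ = 0)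
    (ψ : R⟦X⟧) {d : ℕ} (hd : d < p) (m : ℕ) :
    coeff (p * m + d) (φ * expand p hp ψ) = coeff d φ * coeff m ψ := by
  rw [coeff_mul, sum_eq_single (d, p * m)]
  · rw [coeff_expand_mul]
  · rintro ⟨a, b⟩ hab hne
    rw [HasAntidiagonal.mem_antidiagonal] at hab
    by_cases ha : p ≤ a
    · rw [hφ a ha, zero_mul]
    by_cases hb : p ∣ b
    · obtain ⟨c, rfl⟩ := hb
      have had : a = d := by
        have := congrArg (· % p) hab
        simpa [Nat.add_mul_mod_self_left, Nat.mod_eq_of_lt hd, Nat.mod_eq_of_lt (not_le.mp ha)]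
          using this
      have hcm : c = m := by
        subst had
        exact Nat.eq_of_mul_eq_mul_left (Nat.pos_of_ne_zero hp) (by omega)
      exact absurd (by rw [had, hcm]) hne
    · rw [coeff_expand_of_not_dvd p hp _ hb, mul_zero]
  · simp [add_comm]

theorem coeff_one_sub_X_pow (r k : ℕ) :
    coeff k ((1 - X : R⟦X⟧) ^ r) = (-1) ^ k * r.choose k := by
  induction r generalizing k with
  | zero => cases k <;> simp [coeff_one]
  | succ r ih =>
    cases k with
    | zero => simp
    | succ k =>
      rw [pow_succ, mul_sub, mul_one, map_sub, coeff_succ_mul_X, ih, ih, Nat.choose_succ_succ',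
        pow_succ]
      push_cast
      ring

theorem coeff_one_sub_X_pow_of_lt {r k : ℕ} (h : r < k) : coeff k ((1 - X : R⟦X⟧) ^ r) = 0 := by
  rw [coeff_one_sub_X_pow, Nat.choose_eq_zero_of_lt h, Nat.cast_zero, mul_zero]

end PowerSeries

noncomputable def partialProd (p N : ℕ) : ℤ⟦X⟧ := ∏ i ∈ range N, (1 - X ^ p ^ i) ^ (p - 1)

theorem partialProd_succ_eq_mul_expand {p : ℕ} (hp : p ≠ 0) (N : ℕ) :
    partialProd p (N + 1) = (1 - X) ^ (p - 1) * expand p hp (partialProd p N) := by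
  simp only [partialProd, prod_range_succ', map_prod, map_pow, map_sub, map_one, expand_X,
    ← pow_mul, pow_succ, pow_zero, pow_one, mul_comm]

theorem coeff_partialProd_eq_Dp {p : ℕ} (hp : 1 < p) {m N : ℕ} (hmN : m < N) :
    coeff m (partialProd p N) = Dp p m := by
  induction N, hmN using Nat.le_induction with
  | base => rfl
  | succ N hmN ih =>
    rw [partialProd, prod_range_succ, coeff_mul_one_sub_X_pow_pow_of_lt _
      (lt_of_lt_of_le hmN (Nat.lt_pow_self hp).le), ← ih, partialProd]

theorem Dp_mul_add {p : ℕ} (hp : 1 < p) (m : ℕ) {d : ℕ} (hd : d < p) :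
    Dp p (p * m + d) = coeff d ((1 - X : ℤ⟦X⟧) ^ (p - 1)) * Dp p m := by
  have hp0 : p ≠ 0 := by omega
  have hm : m ≤ p * m := Nat.le_mul_of_pos_left m (by omega)
  rw [← coeff_partialProd_eq_Dp hp (N := p * m + d + 2) (by omega),
    partialProd_succ_eq_mul_expand hp0,
    coeff_mul_expand hp0 (fun i hi => coeff_one_sub_X_pow_of_lt (by omega)) _ hd,
    coeff_partialProd_eq_Dp hp (by omega)]

theorem Dp_zero (p : ℕ) : Dp p 0 = 1 := by
  simp [Dp, Dcoef]

theorem emultiplicity_choose_of_lt_sq {p n k : ℕ} (hp : p.Prime) (hkn : k ≤ n) (hn : n < p ^ 2)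
    (hk : k < p) (hnk : n - k < p) : emultiplicity p (n.choose k) = if p ≤ n then 1 else 0 := by
  rcases Nat.eq_zero_or_pos n with rfl | hn0
  · obtain rfl : k = 0 := by omega
    simpa [hp.ne_zero] using emultiplicity_of_one_right hp.not_isUnit
  rw [Nat.Prime.emultiplicity_choose hp hkn (Nat.log_lt_of_lt_pow hn0.ne' hn)]
  have hcarry : p ^ 1 ≤ k % p ^ 1 + (n - k) % p ^ 1 ↔ p ≤ n := by
    rw [pow_one, Nat.mod_eq_of_lt hk, Nat.mod_eq_of_lt hnk, Nat.add_sub_cancel' hkn]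
  rw [show Ico 1 2 = {1} from rfl, filter_singleton]
  simp only [hcarry]
  split_ifs <;> simp

theorem not_dvd_choose_pred {p d : ℕ} (hp : p.Prime) (hd : d < p) : ¬ p ∣ (p - 1).choose d := by
  rw [← emultiplicity_eq_zero, emultiplicity_choose_of_lt_sq hp (by omega) _ hd (by omega),
    if_neg (by omega)]
  exact (Nat.sub_lt hp.pos one_pos).trans_le (Nat.le_self_pow two_ne_zero p)

theorem not_dvd_Dp {p : ℕ} (hp : p.Prime) (m : ℕ) : ¬ (p : ℤ) ∣ Dp p m := by
  have hprime : Prime (p : ℤ) := Nat.prime_iff_prime_int.mp hp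
  induction m using Nat.strong_induction_on with
  | _ m ih =>
    rcases Nat.eq_zero_or_pos m with rfl | hm
    · rw [Dp_zero]; exact_mod_cast hp.not_dvd_one
    rw [← Nat.div_add_mod m p, Dp_mul_add hp.one_lt _ (Nat.mod_lt m hp.pos), coeff_one_sub_X_pow]
    rw [mul_assoc, (isUnit_neg_one.pow _).dvd_mul_left, hprime.dvd_mul, Int.natCast_dvd_natCast,
      not_or]
    exact ⟨not_dvd_choose_pred hp (Nat.mod_lt m hp.pos), ih _ (Nat.div_lt_self hm hp.one_lt)⟩

theorem sum_choose_mul_Dp {p : ℕ} (hp : 1 < p) (M : ℕ) {u j : ℕ} (huj : u ≤ j) (hj : j < p) :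
    ∑ i ∈ range (u + 1), (-1 : ℤ) ^ i * (u.choose i : ℤ) * Dp p (p * M + j - i) =
      (-1) ^ j * ((u + (p - 1)).choose j : ℤ) * Dp p M := by
  calc ∑ i ∈ range (u + 1), (-1 : ℤ) ^ i * (u.choose i : ℤ) * Dp p (p * M + j - i)
      = (∑ i ∈ range (u + 1),
          coeff i ((1 - X : ℤ⟦X⟧) ^ u) * coeff (j - i) ((1 - X : ℤ⟦X⟧) ^ (p - 1))) * Dp p M := by
        rw [sum_mul]
        refine sum_congr rfl fun i hi => ?_
        have hiu := mem_range.mp hi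
        rw [show p * M + j - i = p * M + (j - i) by omega, Dp_mul_add hp M (by omega)]
        simp only [coeff_one_sub_X_pow]
        ring
    _ = (∑ i ∈ range (j + 1),
          coeff i ((1 - X : ℤ⟦X⟧) ^ u) * coeff (j - i) ((1 - X : ℤ⟦X⟧) ^ (p - 1))) * Dp p M := by
        congr 1
        refine sum_subset (range_subset_range.mpr (by omega)) fun i _ hiu => ?_
        rw [coeff_one_sub_X_pow_of_lt (by simpa using hiu), zero_mul]
    _ = (-1) ^ j * ((u + (p - 1)).choose j : ℤ) * Dp p M := by
        rw [← Nat.sum_antidiagonal_eq_sum_range_succ_mk (fun ij =>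
          coeff ij.1 ((1 - X : ℤ⟦X⟧) ^ u) * coeff ij.2 ((1 - X : ℤ⟦X⟧) ^ (p - 1))),
          ← coeff_mul, ← pow_add, coeff_one_sub_X_pow]

theorem stmt5_general (p u : ℕ) (hp : p.Prime) (hu1 : 1 ≤ u)
    (n n'' k s j : ℕ) (hs : 1 ≤ s) (hj : j ≤ p - 1)
    (hform : n = n'' * p ^ (s + 1) + k * p ^ s + j) (hju : u ≤ j) :
    emultiplicity (p : ℤ)
      (∑ i ∈ Finset.range (u + 1), (-1 : ℤ) ^ i * (u.choose i : ℤ) * Dp p (n - i)) = 1 := by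
  obtain ⟨s, rfl⟩ : ∃ s', s = s' + 1 := ⟨s - 1, by omega⟩
  have hn : n = p * (n'' * p ^ (s + 1) + k * p ^ s) + j := by rw [hform]; ring
  have hprime : Prime (p : ℤ) := Nat.prime_iff_prime_int.mp hp
  have hchoose : emultiplicity p ((u + (p - 1)).choose j) = 1 := by
    have hlt : u + (p - 1) < p ^ 2 :=
      calc u + (p - 1) < 2 * p := by omega
        _ ≤ p ^ 2 := by rw [sq]; exact Nat.mul_le_mul_right p hp.two_le
    rw [emultiplicity_choose_of_lt_sq hp (by omega) hlt (by omega) (by omega), if_pos (by omega)]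
  rw [hn, sum_choose_mul_Dp hp.one_lt _ hju (by omega), mul_assoc,
    emultiplicity_eq_of_associated_right (associated_unit_mul_left _ _ (isUnit_neg_one.pow j)),
    emultiplicity_mul hprime, Int.natCast_emultiplicity, hchoose,
    emultiplicity_eq_zero.mpr (not_dvd_Dp hp _), add_zero]

theorem stmt5 (p u : ℕ) (hp : p.Prime) (hp3 : 3 ≤ p) (hu1 : 1 ≤ u) (hu2 : u ≤ p - 1)
    (n n'' k s j : ℕ) (hk1 : 1 ≤ k) (hk2 : k ≤ p - 1) (hs : 1 ≤ s) (hj : j ≤ p - 1)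
    (hn : p ≤ n) (hform : n = n'' * p ^ (s + 1) + k * p ^ s + j) (hju : u ≤ j) :
    emultiplicity (p : ℤ)
      (∑ i ∈ Finset.range (u + 1), (-1 : ℤ) ^ i * (u.choose i : ℤ) * Dp p (n - i)) = 1 :=
  stmt5_general p u hp hu1 n n'' k s j hs hj hform hju
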